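/- arXiv:2510.12691 — 3 statements merged into one kernel-verified Lean document; each statement's English description precedes it below -/
import Mathlib

section
/- For any two probability measures P and Q with Q absolutely continuous with respect to P (and both admitting densities), E_{X∼Q}[(max(log(P(X)/Q(X)), 0))²] ≤ 4·KL(Q‖P). -/
/-!
Both sides are compared with the squared Hellinger distance `∫ (√p - √q) ^ 2`. Applying
`log t ≤ t - 1` at `t = √(p / q)` gives `log (p / q) ≤ 2 (√p - √q) / √q`. Squared on the set where
the left side is positive, this bounds `q (log⁺ (p / q)) ^ 2` by `4 (√p - √q) ^ 2`; multiplied by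
`-q` and integrated, it gives `KL(Q‖P) ≥ 2 ∫ (q - √p √q) = ∫ (√p - √q) ^ 2`, using that both
densities have total mass one.
-/

open MeasureTheory Real

lemma log_div_le_two_mul_sqrt_sub_sqrt_div {a b : ℝ} (ha : 0 < a) (hb : 0 < b) :
    log (a / b) ≤ 2 * (√a - √b) / √b := by
  have hb' : 0 < √b := sqrt_pos.2 hb
  calc log (a / b) = 2 * log (√a / √b) := by
        rw [← sqrt_div ha.le, log_sqrt (div_pos ha hb).le]; ring
    _ ≤ 2 * (√a / √b - 1) := by
      gcongr; exact log_le_sub_one_of_pos (div_pos (sqrt_pos.2 ha) hb')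
    _ = 2 * (√a - √b) / √b := by field_simp

lemma mul_sq_max_log_div_le {a b : ℝ} (ha : 0 ≤ a) (hb : 0 ≤ b) :
    b * max (log (a / b)) 0 ^ 2 ≤ 4 * (√a - √b) ^ 2 := by
  rcases le_or_gt (log (a / b)) 0 with hneg | hpos
  · rw [max_eq_right hneg, zero_pow two_ne_zero, mul_zero]
    positivity
  have ha0 : 0 < a := ha.lt_of_ne (by rintro rfl; simp at hpos)
  have hb0 : 0 < b := hb.lt_of_ne (by rintro rfl; simp at hpos)
  have hle := log_div_le_two_mul_sqrt_sub_sqrt_div ha0 hb0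
  rw [max_eq_left hpos.le]
  calc b * log (a / b) ^ 2 ≤ √b ^ 2 * (2 * (√a - √b) / √b) ^ 2 := by
        rw [sq_sqrt hb]; gcongr
    _ = 4 * (√a - √b) ^ 2 := by field_simp; ring

lemma two_mul_sub_sqrt_mul_sqrt_le_mul_log_div {a b : ℝ} (ha : 0 ≤ a) (hb : 0 ≤ b)
    (hab : a = 0 → b = 0) :
    2 * (b - √a * √b) ≤ b * log (b / a) := by
  rcases hb.eq_or_lt with rfl | hb0
  · simp
  have ha0 : 0 < a := ha.lt_of_ne fun h => hb0.ne' (hab h.symm)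
  have hle := log_div_le_two_mul_sqrt_sub_sqrt_div ha0 hb0
  calc 2 * (b - √a * √b) = -(b * (2 * (√a - √b) / √b)) := by
        field_simp
        linear_combination -√a * mul_self_sqrt hb
    _ ≤ -(b * log (a / b)) := by gcongr
    _ = b * log (b / a) := by rw [← inv_div, log_inv]; ring

lemma sq_sqrt_le_abs (x : ℝ) : √x ^ 2 ≤ |x| :=
  sq_sqrt' (x := x) ▸ max_le (le_abs_self x) (abs_nonneg x)

section Hellinger

variable {α : Type*} [MeasurableSpace α] {μ : Measure α} {p q : α → ℝ}

lemma MeasureTheory.Integrable.sqrt_mul_sqrt (hp : Integrable p μ) (hq : Integrable q μ) :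
    Integrable (fun x => √(p x) * √(q x)) μ := by
  refine (hp.abs.add hq.abs).mono' ?_ (ae_of_all _ fun x => ?_)
  · exact (continuous_sqrt.comp_aestronglyMeasurable hp.1).mul
      (continuous_sqrt.comp_aestronglyMeasurable hq.1)
  · rw [norm_of_nonneg (by positivity), Pi.add_apply]
    have hp2 := sq_sqrt_le_abs (p x)
    have hq2 := sq_sqrt_le_abs (q x)
    nlinarith [sq_nonneg (√(p x) - √(q x))]

lemma MeasureTheory.Integrable.sq_sqrt_sub_sqrt (hp : Integrable p μ) (hq : Integrable q μ) :
    Integrable (fun x => (√(p x) - √(q x)) ^ 2) μ := by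
  refine (hp.abs.add hq.abs).mono' ?_ (ae_of_all _ fun x => ?_)
  · exact ((continuous_sqrt.comp_aestronglyMeasurable hp.1).sub
      (continuous_sqrt.comp_aestronglyMeasurable hq.1)).pow 2
  · rw [norm_of_nonneg (by positivity), Pi.add_apply]
    have hp2 := sq_sqrt_le_abs (p x)
    have hq2 := sq_sqrt_le_abs (q x)
    nlinarith [mul_nonneg (sqrt_nonneg (p x)) (sqrt_nonneg (q x))]

lemma integral_sq_sqrt_sub_sqrt (hp0 : 0 ≤ᵐ[μ] p) (hq0 : 0 ≤ᵐ[μ] q) (hp : Integrable p μ)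
    (hq : Integrable q μ) :
    ∫ x, (√(p x) - √(q x)) ^ 2 ∂μ = ∫ x, p x ∂μ + ∫ x, q x ∂μ - 2 * ∫ x, √(p x) * √(q x) ∂μ := by
  have hexpand : (fun x => (√(p x) - √(q x)) ^ 2)
      =ᵐ[μ] fun x => p x + q x - 2 * (√(p x) * √(q x)) := by
    filter_upwards [hp0, hq0] with x hpx hqx
    rw [sub_sq, sq_sqrt hpx, sq_sqrt hqx]
    ring
  rw [integral_congr_ae hexpand,
    integral_sub (f := fun x => p x + q x) (hp.add hq) ((hp.sqrt_mul_sqrt hq).const_mul 2),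
    integral_add hp hq, integral_const_mul]

end Hellinger

theorem sq_pos_log_ratio_le_four_kl_general
    {α : Type*} [MeasurableSpace α] (μ : Measure α) (p q : α → ℝ)
    (hp : ∀ x, 0 ≤ p x) (hq : ∀ x, 0 ≤ q x)
    (habs : ∀ x, p x = 0 → q x = 0)
    (hpint : ∫ x, p x ∂μ = 1) (hqint : ∫ x, q x ∂μ = 1)
    (hint2 : Integrable (fun x => q x * Real.log (q x / p x)) μ) :
    ∫ x, q x * (max (Real.log (p x / q x)) 0) ^ 2 ∂μ
      ≤ 4 * ∫ x, q x * Real.log (q x / p x) ∂μ := by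
  have hp_int : Integrable p μ := .of_integral_ne_zero (by simp [hpint])
  have hq_int : Integrable q μ := .of_integral_ne_zero (by simp [hqint])
  calc ∫ x, q x * max (log (p x / q x)) 0 ^ 2 ∂μ
      ≤ ∫ x, 4 * (√(p x) - √(q x)) ^ 2 ∂μ :=
        integral_mono_of_nonneg (ae_of_all _ fun x => mul_nonneg (hq x) (sq_nonneg _))
          ((hp_int.sq_sqrt_sub_sqrt hq_int).const_mul 4)
          (ae_of_all _ fun x => mul_sq_max_log_div_le (hp x) (hq x))
    _ = 4 * ∫ x, 2 * (q x - √(p x) * √(q x)) ∂μ := by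
        rw [integral_const_mul, integral_const_mul,
          integral_sq_sqrt_sub_sqrt (ae_of_all _ hp) (ae_of_all _ hq) hp_int hq_int,
          integral_sub hq_int (hp_int.sqrt_mul_sqrt hq_int), hpint, hqint]
        ring
    _ ≤ 4 * ∫ x, q x * log (q x / p x) ∂μ := by
        gcongr 4 * ?_
        exact integral_mono ((hq_int.sub (hp_int.sqrt_mul_sqrt hq_int)).const_mul 2) hint2
          fun x => two_mul_sub_sqrt_mul_sqrt_le_mul_log_div (hp x) (hq x) (habs x)

/-- For probability measures `P`, `Q` with densities `p`, `q` w.r.t. a base measure `μ`,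
with `Q ≪ P`, the expectation under `Q` of the squared positive part of the
log-likelihood ratio `log(p/q)` is at most `4 · KL(Q‖P)`. -/
theorem sq_pos_log_ratio_le_four_kl
    {α : Type*} [MeasurableSpace α] (μ : Measure α) (p q : α → ℝ)
    (hp : ∀ x, 0 ≤ p x) (hq : ∀ x, 0 ≤ q x)
    (habs : ∀ x, p x = 0 → q x = 0)
    (hpmeas : Measurable p) (hqmeas : Measurable q)
    (hpint : ∫ x, p x ∂μ = 1) (hqint : ∫ x, q x ∂μ = 1)
    (hint1 : Integrable (fun x => q x * (max (Real.log (p x / q x)) 0) ^ 2) μ)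
    (hint2 : Integrable (fun x => q x * Real.log (q x / p x)) μ) :
    ∫ x, q x * (max (Real.log (p x / q x)) 0) ^ 2 ∂μ
      ≤ 4 * ∫ x, q x * Real.log (q x / p x) ∂μ :=
  sq_pos_log_ratio_le_four_kl_general μ p q hp hq habs hpint hqint hint2
end

section
/- Last-iterate convergence of the EM iteration: for every K ≥ 0, KL(P_Y* ‖ P_Y^{(K)}) ≤ KL(P_X* ‖ π^{(0)})/(K+1) + max_{k≤K} ε̃_SM^{(k)} + Σ_{k=0}^{K} ε_SM^{(k)}. -/
/-!
Telescoping the monotonicity inequality shows that the last iterate exceeds every earlier iterate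
by at most the accumulated errors `∑ ε`; hence it exceeds their average by at most as much, and the
average is controlled by the average-iterate bound.
-/

open Finset

section Drift

variable {M : Type*} [AddCommMonoid M] [PartialOrder M] [IsOrderedAddMonoid M] {d ε : ℕ → M}

theorem le_add_sum_Ico_of_le_add_succ (hmono : ∀ k, d (k + 1) ≤ d k + ε k) {m n : ℕ}
    (hmn : m ≤ n) : d n ≤ d m + ∑ ℓ ∈ Ico m n, ε ℓ := by
  induction n, hmn using Nat.le_induction with
  | base => simp
  | succ n hmn ih =>
    calc d (n + 1) ≤ d n + ε n := hmono n
      _ ≤ d m + ∑ ℓ ∈ Ico m n, ε ℓ + ε n := by gcongr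
      _ = d m + ∑ ℓ ∈ Ico m (n + 1), ε ℓ := by rw [sum_Ico_succ_top hmn, add_assoc]

theorem le_add_sum_range_of_le_add_succ (hmono : ∀ k, d (k + 1) ≤ d k + ε k)
    (hε : ∀ k, 0 ≤ ε k) {m n : ℕ} (hmn : m ≤ n) : d n ≤ d m + ∑ ℓ ∈ range n, ε ℓ :=
  (le_add_sum_Ico_of_le_add_succ hmono hmn).trans <| by
    gcongr
    · exact fun ℓ _ _ ↦ hε ℓ
    · rw [← Nat.Ico_zero_eq_range]
      exact Ico_subset_Ico_left m.zero_le

end Drift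

theorem Finset.le_sum_div_card_add {ι α : Type*} [Field α] [LinearOrder α]
    [IsStrictOrderedRing α] {s : Finset ι} (hs : s.Nonempty) {f : ι → α} {a E : α}
    (h : ∀ i ∈ s, a ≤ f i + E) : a ≤ (∑ i ∈ s, f i) / #s + E := by
  have hsum : #s • a ≤ ∑ i ∈ s, (f i + E) := card_nsmul_le_sum s _ a h
  rw [sum_add_distrib, sum_const, nsmul_eq_mul, nsmul_eq_mul] at hsum
  rw [← sub_le_iff_le_add, le_div_iff₀ (by exact_mod_cast hs.card_pos)]
  linarith

theorem em_last_iterate_convergence_general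
    (d ε εt : ℕ → ℝ) (b0 : ℝ)
    (hε : ∀ k, 0 ≤ ε k)
    (hmono : ∀ k, d (k + 1) ≤ d k + ε k)
    (havg : ∀ K : ℕ, (∑ k ∈ Finset.range (K + 1), d k) / (K + 1)
      ≤ b0 / (K + 1) + ⨆ k : Fin (K + 1), εt k)
    (K : ℕ) :
    d K ≤ b0 / (K + 1) + (⨆ k : Fin (K + 1), εt k)
      + ∑ k ∈ Finset.range (K + 1), ε k := by
  have hdrift : ∀ k ∈ range (K + 1), d K ≤ d k + ∑ ℓ ∈ range (K + 1), ε ℓ := by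
    intro k hk
    calc d K ≤ d k + ∑ ℓ ∈ range K, ε ℓ :=
          le_add_sum_range_of_le_add_succ hmono hε (mem_range_succ_iff.mp hk)
      _ ≤ d k + ∑ ℓ ∈ range (K + 1), ε ℓ := by
          rw [sum_range_succ]
          linarith [hε K]
  calc d K ≤ (∑ k ∈ range (K + 1), d k) / #(range (K + 1)) + ∑ ℓ ∈ range (K + 1), ε ℓ :=
        le_sum_div_card_add nonempty_range_add_one hdrift
    _ ≤ _ := by
        rw [card_range, Nat.cast_add_one]
        linarith [havg K]

/-- Last-iterate convergence of the EM iteration.  Writing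
`d k = KL(P_Y* ‖ P_Y^{(k)})`, `ε k = ε_SM^{(k)}`, `εt k = ε̃_SM^{(k)}` and
`b0 = KL(P_X* ‖ π^{(0)})`, assume the monotonicity inequality `d (k+1) ≤ d k + ε k` for
every `k` and the average-iterate bound for every `K`.  Then for every `K ≥ 0`,
`d K ≤ b0/(K+1) + max_{k≤K} εt k + Σ_{k=0}^{K} ε k`. -/
theorem em_last_iterate_convergence
    (d ε εt : ℕ → ℝ) (b0 : ℝ)
    (hd : ∀ k, 0 ≤ d k) (hε : ∀ k, 0 ≤ ε k) (hεt : ∀ k, 0 ≤ εt k) (hb0 : 0 ≤ b0)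
    (hmono : ∀ k, d (k + 1) ≤ d k + ε k)
    (havg : ∀ K : ℕ, (∑ k ∈ Finset.range (K + 1), d k) / (K + 1)
      ≤ b0 / (K + 1) + ⨆ k : Fin (K + 1), εt k)
    (K : ℕ) :
    d K ≤ b0 / (K + 1) + (⨆ k : Fin (K + 1), εt k)
      + ∑ k ∈ Finset.range (K + 1), ε k :=
  em_last_iterate_convergence_general d ε εt b0 hε hmono havg K
end

section
/- Linear convergence of EM under identifiability: if KL(P_X* ‖ π^{(0)}) ≤ R and ε̃_SM^{(k)} ≤ R/κ for all k, then KL(P_X* ‖ π^{(K)}) ≤ exp(−K/(κ+1))·KL(P_X* ‖ π^{(0)}) + (κ+1)·max_k ε̃_SM^{(k)}. -/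
/-! Identifiability turns the descent inequality into the contraction
`a (k+1) ≤ (1 - κ⁻¹) a k + εt k`, valid as long as `a k ≤ R`. The bound `εt k ≤ R / κ` makes
the sublevel set `{a ≤ R}` invariant under this contraction, so it holds at every step; unrolling
gives `a K ≤ (1 - κ⁻¹)^K a 0 + κ sup εt`, and `1 - κ⁻¹ ≤ exp (-1/(κ+1))`. -/

lemma le_one_sub_inv_mul_add_of_le_mul_of_le_sub_add {κ a a' d ε : ℝ} (hκ : 0 < κ)
    (hident : a ≤ κ * d) (hstep : d ≤ a - a' + ε) :
    a' ≤ (1 - κ⁻¹) * a + ε := by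
  have hκa' : κ * a' ≤ (κ - 1) * a + κ * ε := by nlinarith
  calc a' = κ⁻¹ * (κ * a') := by field_simp
    _ ≤ κ⁻¹ * ((κ - 1) * a + κ * ε) := by gcongr
    _ = (1 - κ⁻¹) * a + ε := by field_simp

section Contraction

variable {a ε : ℕ → ℝ} {ρ : ℝ}

lemma forall_le_of_contraction_of_le_one_sub_mul {R : ℝ} (hρ : 0 ≤ ρ)
    (hcontr : ∀ k, a k ≤ R → a (k + 1) ≤ ρ * a k + ε k)
    (hε : ∀ k, ε k ≤ (1 - ρ) * R) (ha0 : a 0 ≤ R) (k : ℕ) : a k ≤ R := by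
  induction k with
  | zero => exact ha0
  | succ k ih =>
    calc a (k + 1) ≤ ρ * a k + ε k := hcontr k ih
      _ ≤ ρ * R + (1 - ρ) * R := by gcongr; exact hε k
      _ = R := by ring

lemma le_pow_mul_add_div_of_contraction {E : ℝ} (hρ0 : 0 ≤ ρ) (hρ1 : ρ < 1)
    (hcontr : ∀ k, a (k + 1) ≤ ρ * a k + ε k) (hεE : ∀ k, ε k ≤ E) (hE : 0 ≤ E) (k : ℕ) :
    a k ≤ ρ ^ k * a 0 + E / (1 - ρ) := by
  have h1ρ : 0 < 1 - ρ := sub_pos.2 hρ1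
  induction k with
  | zero => simpa using div_nonneg hE h1ρ.le
  | succ k ih =>
    calc a (k + 1) ≤ ρ * a k + ε k := hcontr k
      _ ≤ ρ * (ρ ^ k * a 0 + E / (1 - ρ)) + E := by gcongr; exact hεE k
      _ = ρ ^ (k + 1) * a 0 + E / (1 - ρ) := by field_simp; ring

end Contraction

lemma one_sub_inv_pow_le_exp {κ : ℝ} (hκ : 1 ≤ κ) (K : ℕ) :
    (1 - κ⁻¹) ^ K ≤ Real.exp (-(K : ℝ) / (κ + 1)) := by
  have hbase : 1 - κ⁻¹ ≤ Real.exp (-(κ + 1)⁻¹) :=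
    calc 1 - κ⁻¹ ≤ 1 - (κ + 1)⁻¹ := by gcongr; linarith
      _ ≤ Real.exp (-(κ + 1)⁻¹) := Real.one_sub_le_exp_neg _
  calc (1 - κ⁻¹) ^ K ≤ Real.exp (-(κ + 1)⁻¹) ^ K :=
        pow_le_pow_left₀ (sub_nonneg.2 (inv_le_one_of_one_le₀ hκ)) hbase K
    _ = Real.exp (-(K : ℝ) / (κ + 1)) := by rw [← Real.exp_nat_mul]; ring_nf

theorem em_linear_convergence_general
    (a d εt : ℕ → ℝ) (κ R : ℝ) (hκ : 1 ≤ κ)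
    (ha : ∀ k, 0 ≤ a k) (hεt : ∀ k, 0 ≤ εt k)
    (hident : ∀ k, a k ≤ R → a k ≤ κ * d k)
    (hstep : ∀ k, d k ≤ a k - a (k + 1) + εt k)
    (ha0 : a 0 ≤ R) (hεtR : ∀ k, εt k ≤ R / κ)
    (K : ℕ) :
    a K ≤ Real.exp (-(K : ℝ) / (κ + 1)) * a 0 + (κ + 1) * ⨆ k, εt k := by
  have hκ0 : 0 < κ := by linarith
  have hρ0 : 0 ≤ 1 - κ⁻¹ := sub_nonneg.2 (inv_le_one_of_one_le₀ hκ)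
  have hcontr (k : ℕ) (hk : a k ≤ R) : a (k + 1) ≤ (1 - κ⁻¹) * a k + εt k :=
    le_one_sub_inv_mul_add_of_le_mul_of_le_sub_add hκ0 (hident k hk) (hstep k)
  have hinv : ∀ k, a k ≤ R := forall_le_of_contraction_of_le_one_sub_mul hρ0 hcontr
    (fun k => by simpa [div_eq_inv_mul] using hεtR k) ha0
  have hbdd : BddAbove (Set.range εt) := ⟨R / κ, Set.forall_mem_range.2 hεtR⟩
  have hE : 0 ≤ ⨆ k, εt k := (hεt 0).trans (le_ciSup hbdd 0)
  have hgeom := le_pow_mul_add_div_of_contraction hρ0 (by simpa using hκ0)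
    (fun k => hcontr k (hinv k)) (le_ciSup hbdd) hE K
  calc a K ≤ (1 - κ⁻¹) ^ K * a 0 + κ * ⨆ k, εt k := by simpa [div_inv_eq_mul, mul_comm] using hgeom
    _ ≤ Real.exp (-(K : ℝ) / (κ + 1)) * a 0 + (κ + 1) * ⨆ k, εt k := by
      gcongr
      · exact ha 0
      · exact one_sub_inv_pow_le_exp hκ K
      · linarith

/-- Linear convergence of EM under identifiability.  Writing
`a k = KL(P_X* ‖ π^{(k)})`, `d k = KL(P_Y* ‖ P_Y^{(k)})` (with `P_Y^{(k)} = Q∘π^{(k)}`)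
and `εt k = ε̃_SM^{(k)}`, the identifiability assumption states that `a k ≤ R` implies
`a k ≤ κ · d k`, and the one-step descent inequality `d k ≤ a k − a (k+1) + εt k` holds
for each `k`.  If moreover `a 0 ≤ R` and `εt k ≤ R/κ` for all `k`, then
`a K ≤ exp(−K/(κ+1))·a 0 + (κ+1)·sup_k εt k`. -/
theorem em_linear_convergence
    (a d εt : ℕ → ℝ) (κ R : ℝ) (hκ : 1 ≤ κ) (hR : 0 ≤ R)
    (ha : ∀ k, 0 ≤ a k) (hd : ∀ k, 0 ≤ d k) (hεt : ∀ k, 0 ≤ εt k)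
    (hident : ∀ k, a k ≤ R → a k ≤ κ * d k)
    (hstep : ∀ k, d k ≤ a k - a (k + 1) + εt k)
    (ha0 : a 0 ≤ R) (hεtR : ∀ k, εt k ≤ R / κ)
    (K : ℕ) :
    a K ≤ Real.exp (-(K : ℝ) / (κ + 1)) * a 0 + (κ + 1) * ⨆ k, εt k :=
  em_linear_convergence_general a d εt κ R hκ ha hεt hident hstep ha0 hεtR K
end
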